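/- arXiv:1502.07474 — 3 statements merged into one kernel-verified Lean document; each statement's English description precedes it below -/
import Mathlib

section
/- Let P, Q, R be polynomials over ℂ with Q ≠ 0, and set f = Q²·R and g = P/Q (on the set where Q ≠ 0). If 2·deg Q + deg R ≤ n-1, 2·deg P + deg R ≤ n-1, and deg P + deg Q + deg R ≤ n-1, then each of the three functions f·(1-g²)/2, i·f·(1+g²)/2, and f·g is a polynomial of degree at most n-1. -/
open Polynomial

lemma aux_deg_bound (n : ℕ) (S T R : Polynomial ℂ) (c : ℂ)
    (h1 : S.natDegree + R.natDegree ≤ n - 1)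
    (h2 : T.natDegree + R.natDegree ≤ n - 1) :
    (C c * ((S + T) * R)).natDegree ≤ n - 1 := by
  calc (C c * ((S + T) * R)).natDegree
      ≤ (C c).natDegree + ((S + T) * R).natDegree := natDegree_mul_le
    _ = ((S + T) * R).natDegree := by rw [natDegree_C, zero_add]
    _ ≤ (S + T).natDegree + R.natDegree := natDegree_mul_le
    _ ≤ max S.natDegree T.natDegree + R.natDegree := by
        gcongr; exact natDegree_add_le _ _
    _ ≤ n - 1 := by omega

/-- Theorem 3.1, converse part: for polynomials P, Q, R with
Q ≠ 0 and the degree constraints, the Weierstrass data f = Q²·R,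
g = P/Q give components f·(1-g²)/2, i·f·(1+g²)/2, f·g that are polynomials
of degree at most n-1. -/
theorem weierstrass_data_polynomial_converse
    (n : ℕ) (P Q R : Polynomial ℂ) (hQ : Q ≠ 0)
    (h1 : 2 * Q.natDegree + R.natDegree ≤ n - 1)
    (h2 : 2 * P.natDegree + R.natDegree ≤ n - 1)
    (h3 : P.natDegree + Q.natDegree + R.natDegree ≤ n - 1) :
    ∃ A B C : Polynomial ℂ,
      A.natDegree ≤ n - 1 ∧ B.natDegree ≤ n - 1 ∧ C.natDegree ≤ n - 1 ∧
      ∀ z : ℂ, Q.eval z ≠ 0 →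
        ((Q ^ 2 * R).eval z * (1 - (P.eval z / Q.eval z) ^ 2) / 2 = A.eval z ∧
         Complex.I * (Q ^ 2 * R).eval z * (1 + (P.eval z / Q.eval z) ^ 2) / 2 = B.eval z ∧
         (Q ^ 2 * R).eval z * (P.eval z / Q.eval z) = C.eval z) := by
  have hQd : (Q ^ 2).natDegree + R.natDegree ≤ n - 1 :=
    le_trans (by have := natDegree_pow_le (p := Q) (n := 2); omega) h1
  have hPd : (P ^ 2).natDegree + R.natDegree ≤ n - 1 :=
    le_trans (by have := natDegree_pow_le (p := P) (n := 2); omega) h2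
  refine ⟨Polynomial.C (1/2 : ℂ) * ((Q^2 + -(P^2)) * R),
          Polynomial.C (Complex.I/2) * ((Q^2 + P^2) * R),
          P * Q * R, ?_, ?_, ?_, ?_⟩
  · exact aux_deg_bound n (Q^2) (-(P^2)) R _ hQd (by rwa [natDegree_neg])
  · exact aux_deg_bound n (Q^2) (P^2) R _ hQd hPd
  · calc (P * Q * R).natDegree ≤ (P * Q).natDegree + R.natDegree := natDegree_mul_le
      _ ≤ P.natDegree + Q.natDegree + R.natDegree := by
          gcongr; exact natDegree_mul_le
      _ ≤ n - 1 := h3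
  · intro z hz
    simp only [eval_mul, eval_sub, eval_add, eval_neg, eval_pow, eval_C]
    refine ⟨?_, ?_, ?_⟩ <;> field_simp <;> ring
end

section
/- For the harmonic degree-five polynomial surface r(u,v) with coefficient vectors a,b,c,d,e,f,g,h,i,j,k ∈ ℝ³ (as in the standard form), the conditions |r_u|² = |r_v|² and ⟨r_u, r_v⟩ = 0 for all (u,v) ∈ ℝ² imply ⟨a,a⟩ = ⟨b,b⟩ and ⟨a,b⟩ = 0. -/
/-!
Along the axis `v = 0` both partial derivatives are quartic curves in `u`, with leading
coefficients `5a` and `5b`. Hence `E - G` and `F` restricted to the axis are polynomials of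
degree at most eight whose top coefficients are `25(⟨a,a⟩ - ⟨b,b⟩)` and `25⟨a,b⟩`, and these
vanish because the polynomials do. To read off a top coefficient, reverse the polynomial:
`t ↦ t⁴ r(1/t)` extends continuously to `t = 0`, where it equals the leading coefficient.
-/

/-- The general harmonic degree-five polynomial surface with coefficient
vectors a,…,k ∈ ℝ³. -/
noncomputable def quinticSurface (a b c d e f g h i j k : ℝ × ℝ × ℝ)
    (u v : ℝ) : ℝ × ℝ × ℝ :=
  (u ^ 5 - 10 * u ^ 3 * v ^ 2 + 5 * u * v ^ 4) • a
    + (v ^ 5 - 10 * u ^ 2 * v ^ 3 + 5 * u ^ 4 * v) • b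
    + (u ^ 4 - 6 * u ^ 2 * v ^ 2 + v ^ 4) • c
    + (u * v * (u ^ 2 - v ^ 2)) • d
    + (u * (u ^ 2 - 3 * v ^ 2)) • e
    + (v * (v ^ 2 - 3 * u ^ 2)) • f
    + (u ^ 2 - v ^ 2) • g + (u * v) • h + u • i + v • j + k

/-- Euclidean dot product on ℝ³ (as ℝ × ℝ × ℝ). -/
def dot3 (p q : ℝ × ℝ × ℝ) : ℝ := p.1 * q.1 + p.2.1 * q.2.1 + p.2.2 * q.2.2

open Finset

section PolyCurve

variable {E : Type*}

def polyCurve [AddCommMonoid E] [Module ℝ E] {n : ℕ} (w : Fin n → E) (t : ℝ) : E :=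
  ∑ k : Fin n, t ^ (k : ℕ) • w k

lemma polyCurve_apply_zero [AddCommMonoid E] [Module ℝ E] {n : ℕ} (w : Fin (n + 1) → E) :
    polyCurve w 0 = w 0 := by
  simp [polyCurve, Fin.sum_univ_succ]

lemma hasDerivAt_polyCurve [NormedAddCommGroup E] [NormedSpace ℝ E] {n : ℕ}
    (w : Fin (n + 1) → E) (x : ℝ) :
    HasDerivAt (polyCurve w) (polyCurve (fun k : Fin n => ((k : ℝ) + 1) • w k.succ) x) x := by
  unfold polyCurve
  simp only [Fin.sum_univ_succ (fun k : Fin (n + 1) => _), Fin.val_zero, pow_zero, one_smul,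
    Fin.val_succ, smul_smul]
  refine (HasDerivAt.fun_sum fun k _ => ?_).const_add (w 0)
  simpa [mul_comm] using (hasDerivAt_pow ((k : ℕ) + 1) x).smul_const (w k.succ)

lemma smul_polyCurve_inv [AddCommMonoid E] [Module ℝ E] {n : ℕ} (w : Fin (n + 1) → E) {t : ℝ}
    (ht : t ≠ 0) : t ^ n • polyCurve w t⁻¹ = ∑ k : Fin (n + 1), t ^ (n - k : ℕ) • w k := by
  simp only [polyCurve, smul_sum, smul_smul]
  refine sum_congr rfl fun k _ => ?_
  rw [pow_sub₀ t ht (Nat.lt_succ_iff.mp k.isLt), inv_pow]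

end PolyCurve

lemma dot3_smul_smul (r s : ℝ) (p q : ℝ × ℝ × ℝ) : dot3 (r • p) (s • q) = r * s * dot3 p q := by
  simp only [dot3, Prod.smul_fst, Prod.smul_snd, smul_eq_mul]; ring

lemma dot3_last_eq_of_forall_dot3_polyCurve_eq {n : ℕ} (p q p' q' : Fin (n + 1) → ℝ × ℝ × ℝ)
    (h : ∀ u, dot3 (polyCurve p u) (polyCurve q u) = dot3 (polyCurve p' u) (polyCurve q' u)) :
    dot3 (p (Fin.last n)) (q (Fin.last n)) = dot3 (p' (Fin.last n)) (q' (Fin.last n)) := by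
  let rev (w : Fin (n + 1) → ℝ × ℝ × ℝ) (t : ℝ) := ∑ k : Fin (n + 1), t ^ (n - k : ℕ) • w k
  have rev_zero (w : Fin (n + 1) → ℝ × ℝ × ℝ) : rev w 0 = w (Fin.last n) := by
    simp [rev, Fin.sum_univ_castSucc, Nat.sub_eq_zero_iff_le]
  have hrev : (fun t => dot3 (rev p t) (rev q t)) = fun t => dot3 (rev p' t) (rev q' t) := by
    refine Continuous.ext_on (dense_compl_singleton 0) (by unfold dot3 rev; fun_prop)
      (by unfold dot3 rev; fun_prop) fun t (ht : t ≠ 0) => ?_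
    simp only [rev, ← smul_polyCurve_inv _ ht, dot3_smul_smul, h]
  simpa [rev_zero] using congrFun hrev 0

section QuinticSurface

variable (a b c d e f g h i j k : ℝ × ℝ × ℝ)

lemma quinticSurface_fst_eq_polyCurve (v : ℝ) :
    (fun t => quinticSurface a b c d e f g h i j k t v) = polyCurve
      ![(v ^ 5) • b + (v ^ 4) • c + (v ^ 3) • f - (v ^ 2) • g + v • j + k,
        (5 * v ^ 4) • a - (v ^ 3) • d - (3 * v ^ 2) • e + v • h + i,
        (-(10 * v ^ 3)) • b - (6 * v ^ 2) • c - (3 * v) • f + g,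
        (-(10 * v ^ 2)) • a + v • d + e,
        (5 * v) • b + c,
        a] := by
  funext t
  simp only [quinticSurface, polyCurve, Fin.sum_univ_six, Matrix.cons_val, Fin.isValue,
    Fin.coe_ofNat_eq_mod]
  module

lemma quinticSurface_snd_eq_polyCurve (u : ℝ) :
    (fun t => quinticSurface a b c d e f g h i j k u t) = polyCurve
      ![(u ^ 5) • a + (u ^ 4) • c + (u ^ 3) • e + (u ^ 2) • g + u • i + k,
        (5 * u ^ 4) • b + (u ^ 3) • d - (3 * u ^ 2) • f + u • h + j,
        (-(10 * u ^ 3)) • a - (6 * u ^ 2) • c - (3 * u) • e - g,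
        (-(10 * u ^ 2)) • b - u • d + f,
        (5 * u) • a + c,
        b] := by
  funext t
  simp only [quinticSurface, polyCurve, Fin.sum_univ_six, Matrix.cons_val, Fin.isValue,
    Fin.coe_ofNat_eq_mod]
  module

lemma hasDerivAt_quinticSurface_fst_zero (u : ℝ) :
    HasDerivAt (fun t => quinticSurface a b c d e f g h i j k t 0)
      (polyCurve ![i, (2 : ℝ) • g, (3 : ℝ) • e, (4 : ℝ) • c, (5 : ℝ) • a] u) u := by
  rw [quinticSurface_fst_eq_polyCurve]
  refine (hasDerivAt_polyCurve _ u).congr_deriv (congrArg₂ polyCurve ?_ rfl)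
  funext m
  fin_cases m <;> simp <;> norm_num

lemma hasDerivAt_quinticSurface_snd_zero (u : ℝ) :
    HasDerivAt (fun t => quinticSurface a b c d e f g h i j k u t)
      (polyCurve ![j, h, (-3 : ℝ) • f, d, (5 : ℝ) • b] u) 0 := by
  rw [quinticSurface_snd_eq_polyCurve]
  refine (hasDerivAt_polyCurve _ 0).congr_deriv ?_
  rw [polyCurve_apply_zero]
  simp only [polyCurve, Fin.sum_univ_five, Matrix.cons_val, Fin.isValue, Fin.coe_ofNat_eq_mod,
    Nat.reduceMod, Fin.succ_zero_eq_one]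
  module

end QuinticSurface

/-- if the harmonic degree-five polynomial surface is in
isothermal parameters (E = G, F = 0 everywhere), then ⟨a,a⟩ = ⟨b,b⟩ and
⟨a,b⟩ = 0. -/
theorem quintic_isothermal_top_coefficients
    (a b c d e f g h i j k : ℝ × ℝ × ℝ)
    (hEG : ∀ u v : ℝ,
      dot3 (deriv (fun t => quinticSurface a b c d e f g h i j k t v) u)
           (deriv (fun t => quinticSurface a b c d e f g h i j k t v) u)
      = dot3 (deriv (fun t => quinticSurface a b c d e f g h i j k u t) v)
             (deriv (fun t => quinticSurface a b c d e f g h i j k u t) v))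
    (hF : ∀ u v : ℝ,
      dot3 (deriv (fun t => quinticSurface a b c d e f g h i j k t v) u)
           (deriv (fun t => quinticSurface a b c d e f g h i j k u t) v) = 0) :
    dot3 a a = dot3 b b ∧ dot3 a b = 0 := by
  have hu u := (hasDerivAt_quinticSurface_fst_zero a b c d e f g h i j k u).deriv
  have hv u := (hasDerivAt_quinticSurface_snd_zero a b c d e f g h i j k u).deriv
  have hEaxis : ∀ u, _ := fun u => hEG u 0
  have hFaxis : ∀ u, _ := fun u => hF u 0
  simp only [hu, hv] at hEaxis hFaxis
  have hEtop : dot3 ((5 : ℝ) • a) ((5 : ℝ) • a) = dot3 ((5 : ℝ) • b) ((5 : ℝ) • b) :=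
    dot3_last_eq_of_forall_dot3_polyCurve_eq _ _ _ _ hEaxis
  have hFtop : dot3 ((5 : ℝ) • a) ((5 : ℝ) • b) = dot3 0 0 :=
    dot3_last_eq_of_forall_dot3_polyCurve_eq _ _ 0 0 fun u =>
      (hFaxis u).trans (by simp [polyCurve, dot3])
  rw [dot3_smul_smul, dot3_smul_smul] at hEtop
  rw [dot3_smul_smul] at hFtop
  exact ⟨by linarith, by simpa [dot3] using hFtop⟩
end

section
/- Let n ≥ 3 be an integer, ω > 0 a real number, and define x(u,v) = (-P_n + ω·P_{n-2}, Q_n + ω·Q_{n-2}, (2√(n(n-2)ω)/(n-1))·P_{n-1}), where P_k(u,v) = Re((u+iv)^k) and Q_k(u,v) = Im((u+iv)^k). Then x is harmonic and satisfies the isothermal conditions ⟨x_u, x_u⟩ = ⟨x_v, x_v⟩ and ⟨x_u, x_v⟩ = 0; hence x is a minimal surface. -/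
/-!
Each coordinate of the Xu–Wang surface is the real part of an entire function `Fₖ` of
`z = u + i v` (using `Q_k = Re (-i z^k)`). Real parts of holomorphic functions are harmonic, and
`x_u = Re φ`, `x_v = Re (i φ)` for `φ = F'`, so the two isothermal conditions are the real and
imaginary parts of `φ₁² + φ₂² + φ₃² = 0`. Here `φ₁² + φ₂² = (φ₁ + i φ₂)(φ₁ - i φ₂) =
-4 n (n - 2) ω z^(2n-4)`, which the coefficient of the third coordinate is chosen to cancel.
-/

open Complex

/-- P_k(u,v) = Re((u+iv)^k). -/
noncomputable def Pxy (k : ℕ) (u v : ℝ) : ℝ := (((u : ℂ) + Complex.I * v) ^ k).re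

/-- Q_k(u,v) = Im((u+iv)^k). -/
noncomputable def Qxy (k : ℕ) (u v : ℝ) : ℝ := (((u : ℂ) + Complex.I * v) ^ k).im

/-- The Xu–Wang polynomial surface of degree n with parameter ω. -/
noncomputable def xuWang (n : ℕ) (ω : ℝ) (u v : ℝ) : ℝ × ℝ × ℝ :=
  (-Pxy n u v + ω * Pxy (n - 2) u v,
   Qxy n u v + ω * Qxy (n - 2) u v,
   2 * Real.sqrt ((n : ℝ) * ((n : ℝ) - 2) * ω) / ((n : ℝ) - 1) * Pxy (n - 1) u v)

noncomputable def reSurface (f₁ f₂ f₃ : ℂ → ℂ) (u v : ℝ) : ℝ × ℝ × ℝ :=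
  ((f₁ (u + I * v)).re, (f₂ (u + I * v)).re, (f₃ (u + I * v)).re)

section PartialDerivatives

variable {f : ℂ → ℂ} {f' : ℂ} {u v : ℝ}

theorem HasDerivAt.re_comp_horizontal (hf : HasDerivAt f f' (u + I * v)) :
    HasDerivAt (fun t : ℝ => (f (t + I * v)).re) f'.re u := by
  have hline : HasDerivAt (fun w : ℂ => w + I * v) 1 u := (hasDerivAt_id _).add_const _
  simpa using (hf.comp (u : ℂ) hline).real_of_complex

theorem HasDerivAt.re_comp_vertical (hf : HasDerivAt f f' (u + I * v)) :
    HasDerivAt (fun t : ℝ => (f (u + I * t)).re) (I * f').re v := by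
  have hline : HasDerivAt (fun w : ℂ => u + I * w) I v := by
    simpa using ((hasDerivAt_id (v : ℂ)).const_mul I).const_add (u : ℂ)
  simpa [mul_comm] using (hf.comp (v : ℂ) hline).real_of_complex

end PartialDerivatives

theorem dot3_re_I_mul_of_sq_add_sq_add_sq_eq_zero {a b c : ℂ} (h : a ^ 2 + b ^ 2 + c ^ 2 = 0) :
    dot3 (a.re, b.re, c.re) (a.re, b.re, c.re)
        = dot3 ((I * a).re, (I * b).re, (I * c).re) ((I * a).re, (I * b).re, (I * c).re)
      ∧ dot3 (a.re, b.re, c.re) ((I * a).re, (I * b).re, (I * c).re) = 0 := by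
  have hre := congrArg re h
  have him := congrArg im h
  simp only [add_re, add_im, sq, mul_re, mul_im, zero_re, zero_im] at hre him
  simp only [dot3, mul_re, I_re, I_im]
  exact ⟨by linear_combination hre, by linear_combination (-1 / 2 : ℝ) * him⟩

section ReSurface

variable {f₁ f₂ f₃ : ℂ → ℂ}

theorem deriv_reSurface_horizontal (h₁ : Differentiable ℂ f₁) (h₂ : Differentiable ℂ f₂)
    (h₃ : Differentiable ℂ f₃) (u v : ℝ) :
    deriv (fun t => reSurface f₁ f₂ f₃ t v) u = reSurface (deriv f₁) (deriv f₂) (deriv f₃) u v :=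
  ((h₁ _).hasDerivAt.re_comp_horizontal.prodMk
    ((h₂ _).hasDerivAt.re_comp_horizontal.prodMk (h₃ _).hasDerivAt.re_comp_horizontal)).deriv

theorem deriv_reSurface_vertical (h₁ : Differentiable ℂ f₁) (h₂ : Differentiable ℂ f₂)
    (h₃ : Differentiable ℂ f₃) (u v : ℝ) :
    deriv (fun t => reSurface f₁ f₂ f₃ u t) v =
      reSurface (I • deriv f₁) (I • deriv f₂) (I • deriv f₃) u v :=
  ((h₁ _).hasDerivAt.re_comp_vertical.prodMk
    ((h₂ _).hasDerivAt.re_comp_vertical.prodMk (h₃ _).hasDerivAt.re_comp_vertical)).deriv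

theorem reSurface_laplacian_eq_zero (h₁ : Differentiable ℂ f₁) (h₂ : Differentiable ℂ f₂)
    (h₃ : Differentiable ℂ f₃) (u v : ℝ) :
    deriv (fun s => deriv (fun t => reSurface f₁ f₂ f₃ t v) s) u
      + deriv (fun s => deriv (fun t => reSurface f₁ f₂ f₃ u t) s) v = 0 := by
  simp_rw [deriv_reSurface_horizontal h₁ h₂ h₃, deriv_reSurface_vertical h₁ h₂ h₃,
    deriv_reSurface_horizontal h₁.deriv h₂.deriv h₃.deriv,
    deriv_reSurface_vertical (h₁.deriv.const_smul I) (h₂.deriv.const_smul I)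
      (h₃.deriv.const_smul I)]
  simp [reSurface, deriv_const_smul_field]

theorem reSurface_isothermal (h₁ : Differentiable ℂ f₁) (h₂ : Differentiable ℂ f₂)
    (h₃ : Differentiable ℂ f₃) (u v : ℝ)
    (hnull : deriv f₁ (u + I * v) ^ 2 + deriv f₂ (u + I * v) ^ 2 + deriv f₃ (u + I * v) ^ 2 = 0) :
    dot3 (deriv (fun t => reSurface f₁ f₂ f₃ t v) u) (deriv (fun t => reSurface f₁ f₂ f₃ t v) u)
        = dot3 (deriv (fun t => reSurface f₁ f₂ f₃ u t) v)
            (deriv (fun t => reSurface f₁ f₂ f₃ u t) v)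
      ∧ dot3 (deriv (fun t => reSurface f₁ f₂ f₃ t v) u)
          (deriv (fun t => reSurface f₁ f₂ f₃ u t) v) = 0 := by
  rw [deriv_reSurface_horizontal h₁ h₂ h₃, deriv_reSurface_vertical h₁ h₂ h₃]
  exact dot3_re_I_mul_of_sq_add_sq_add_sq_eq_zero hnull

end ReSurface

theorem xuWang_coeff_sq {x ω : ℝ} (hx : 2 ≤ x) (hω : 0 ≤ ω) :
    (2 * Real.sqrt (x * (x - 2) * ω) / (x - 1)) ^ 2 * (x - 1) ^ 2 = 4 * (x * (x - 2) * ω) := by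
  have hx1 : x - 1 ≠ 0 := by linarith
  rw [← mul_pow, div_mul_cancel₀ _ hx1, mul_pow, Real.sq_sqrt (by positivity)]
  norm_num

section XuWangLift

variable (n : ℕ) (ω : ℝ)

noncomputable def xuWangLift₁ (z : ℂ) : ℂ := -z ^ n + ω * z ^ (n - 2)

noncomputable def xuWangLift₂ (z : ℂ) : ℂ := -I * (z ^ n + ω * z ^ (n - 2))

noncomputable def xuWangLift₃ (z : ℂ) : ℂ :=
  (2 * Real.sqrt (n * (n - 2) * ω) / (n - 1)) • z ^ (n - 1)

theorem xuWang_eq_reSurface :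
    xuWang n ω = reSurface (xuWangLift₁ n ω) (xuWangLift₂ n ω) (xuWangLift₃ n ω) := by
  ext u v <;>
    simp [xuWang, reSurface, xuWangLift₁, xuWangLift₂, xuWangLift₃, Pxy, Qxy,
      -Complex.real_smul, Complex.smul_re]

theorem hasDerivAt_xuWangLift₁ (z : ℂ) :
    HasDerivAt (xuWangLift₁ n ω) (-(n * z ^ (n - 1)) + ω * ((n - 2 : ℕ) * z ^ (n - 2 - 1))) z :=
  (hasDerivAt_pow n z).neg.add ((hasDerivAt_pow (n - 2) z).const_mul _)

theorem hasDerivAt_xuWangLift₂ (z : ℂ) :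
    HasDerivAt (xuWangLift₂ n ω)
      (-I * (n * z ^ (n - 1) + ω * ((n - 2 : ℕ) * z ^ (n - 2 - 1)))) z :=
  ((hasDerivAt_pow n z).add ((hasDerivAt_pow (n - 2) z).const_mul _)).const_mul _

theorem hasDerivAt_xuWangLift₃ (z : ℂ) :
    HasDerivAt (xuWangLift₃ n ω)
      ((2 * Real.sqrt (n * (n - 2) * ω) / (n - 1)) • ((n - 1 : ℕ) * z ^ (n - 1 - 1))) z :=
  (hasDerivAt_pow (n - 1) z).fun_const_smul _

theorem differentiable_xuWangLift₁ : Differentiable ℂ (xuWangLift₁ n ω) :=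
  fun z => (hasDerivAt_xuWangLift₁ n ω z).differentiableAt

theorem differentiable_xuWangLift₂ : Differentiable ℂ (xuWangLift₂ n ω) :=
  fun z => (hasDerivAt_xuWangLift₂ n ω z).differentiableAt

theorem differentiable_xuWangLift₃ : Differentiable ℂ (xuWangLift₃ n ω) :=
  fun z => (hasDerivAt_xuWangLift₃ n ω z).differentiableAt

theorem xuWangLift_deriv_sq_sum {n : ℕ} (hn : 3 ≤ n) {ω : ℝ} (hω : 0 ≤ ω) (z : ℂ) :
    deriv (xuWangLift₁ n ω) z ^ 2 + deriv (xuWangLift₂ n ω) z ^ 2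
      + deriv (xuWangLift₃ n ω) z ^ 2 = 0 := by
  obtain ⟨m, rfl⟩ : ∃ m, n = m + 3 := ⟨n - 3, by omega⟩
  have hc := xuWang_coeff_sq (x := ((m + 3 : ℕ) : ℝ)) (by push_cast; linarith) hω
  rw [(hasDerivAt_xuWangLift₁ _ _ z).deriv, (hasDerivAt_xuWangLift₂ _ _ z).deriv,
    (hasDerivAt_xuWangLift₃ _ _ z).deriv]
  simp only [Complex.real_smul]
  have hcC := congrArg (fun r : ℝ => (r : ℂ)) hc
  push_cast at hcC ⊢
  linear_combination z ^ (2 * m + 2) * hcC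
    + ((m + 3) * z ^ (m + 2) + ω * ((m + 1) * z ^ m)) ^ 2 * I_sq

end XuWangLift

/-- the Xu–Wang surface of degree n ≥ 3 with parameter ω > 0
is harmonic and satisfies the isothermal conditions ⟨x_u,x_u⟩ = ⟨x_v,x_v⟩
and ⟨x_u,x_v⟩ = 0, hence is a minimal surface. -/
theorem xu_wang_minimal (n : ℕ) (hn : 3 ≤ n) (ω : ℝ) (hω : 0 < ω) :
    (∀ u v : ℝ,
      deriv (fun s => deriv (fun t => xuWang n ω t v) s) u
        + deriv (fun s => deriv (fun t => xuWang n ω u t) s) v = 0)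
    ∧ (∀ u v : ℝ,
      dot3 (deriv (fun t => xuWang n ω t v) u) (deriv (fun t => xuWang n ω t v) u)
        = dot3 (deriv (fun t => xuWang n ω u t) v) (deriv (fun t => xuWang n ω u t) v)
      ∧ dot3 (deriv (fun t => xuWang n ω t v) u) (deriv (fun t => xuWang n ω u t) v) = 0) := by
  have h₁ := differentiable_xuWangLift₁ n ω
  have h₂ := differentiable_xuWangLift₂ n ω
  have h₃ := differentiable_xuWangLift₃ n ω
  rw [xuWang_eq_reSurface]
  exact ⟨reSurface_laplacian_eq_zero h₁ h₂ h₃, fun u v =>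
    reSurface_isothermal h₁ h₂ h₃ u v (xuWangLift_deriv_sq_sum hn hω.le _)⟩
end
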